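/- Let μ be a strictly positive finitely additive probability measure on an algebra 𝔄 of subsets of X, and let Z ⊆ X be such that for i ∈ {0,1} (with Z⁰ = Z and Z¹ = X \ Z) one has μ*(A ∩ Zⁱ) > 0 whenever A ∈ 𝔄 and A ∩ Zⁱ ≠ ∅. Then μ extends to a strictly positive finitely additive probability measure on the algebra 𝔄(Z) generated by 𝔄 ∪ {Z}. -/

import Mathlib

/-!
Łoś–Marczewski: for any `W ⊆ X`, the set function `C ↦ μ*(C ∩ W) + μ_*(C ∩ Wᶜ)` is a finitely
additive probability extending `μ` to every `C` that agrees on `W` and on `Wᶜ` with members of `𝔄`,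
and these `C` include the algebra generated by `𝔄` and `Z` when `W = Z` or `W = Zᶜ`. Additivity
comes from additivity of `μ*` on sets separated by disjoint members of `𝔄`, together with
`μ_*(A ∩ W) = μ A - μ*(A ∩ Wᶜ)` for `A ∈ 𝔄`. The average of the extensions for `W = Z` and
`W = Zᶜ` dominates `μ*(C ∩ Z) / 2` and `μ*(C ∩ Zᶜ) / 2`, so the positivity hypotheses make it
strictly positive.
-/

open Set

/-- `𝔄` is an algebra of subsets of `X`. -/
def IsAlg {X : Type*} (𝔄 : Set (Set X)) : Prop :=
  ∅ ∈ 𝔄 ∧ (∀ A ∈ 𝔄, Aᶜ ∈ 𝔄) ∧ ∀ A ∈ 𝔄, ∀ B ∈ 𝔄, A ∪ B ∈ 𝔄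

/-- `μ` is a finitely additive probability measure on the algebra `𝔄`. -/
def IsFAProb {X : Type*} (𝔄 : Set (Set X)) (μ : Set X → ℝ) : Prop :=
  μ univ = 1 ∧ (∀ A ∈ 𝔄, 0 ≤ μ A) ∧
    ∀ A ∈ 𝔄, ∀ B ∈ 𝔄, Disjoint A B → μ (A ∪ B) = μ A + μ B

/-- `μ` is strictly positive on `𝔄`. -/
def StrictlyPos {X : Type*} (𝔄 : Set (Set X)) (μ : Set X → ℝ) : Prop :=
  ∀ A ∈ 𝔄, A.Nonempty → 0 < μ A

/-- The outer measure `μ*` induced by `μ` on `𝔄`. -/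
noncomputable def outerM {X : Type*} (𝔄 : Set (Set X)) (μ : Set X → ℝ) (E : Set X) : ℝ :=
  sInf (μ '' {A | A ∈ 𝔄 ∧ E ⊆ A})

/-- The algebra of sets generated by the family `S`. -/
inductive GenAlg {X : Type*} (S : Set (Set X)) : Set X → Prop
  | basic : ∀ A ∈ S, GenAlg S A
  | empty : GenAlg S ∅
  | compl : ∀ A, GenAlg S A → GenAlg S Aᶜ
  | union : ∀ A B, GenAlg S A → GenAlg S B → GenAlg S (A ∪ B)

open MeasureTheory

section

variable {X : Type*} {𝔄 : Set (Set X)} {μ : Set X → ℝ}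

theorem IsAlg.isSetAlgebra (h𝔄 : IsAlg 𝔄) : IsSetAlgebra 𝔄 :=
  ⟨h𝔄.1, fun A hA => h𝔄.2.1 A hA, fun A B hA hB => h𝔄.2.2 A hA B hB⟩

namespace IsFAProb

variable {A B : Set X}

theorem mono (hμ : IsFAProb 𝔄 μ) (h𝔄 : IsSetAlgebra 𝔄) (hA : A ∈ 𝔄) (hB : B ∈ 𝔄)
    (hAB : A ⊆ B) : μ A ≤ μ B := by
  have hsplit := hμ.2.2 A hA (B \ A) (h𝔄.sdiff_mem hB hA) disjoint_sdiff_right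
  rw [union_sdiff_cancel hAB] at hsplit
  linarith [hμ.2.1 _ (h𝔄.sdiff_mem hB hA)]

theorem union_le (hμ : IsFAProb 𝔄 μ) (h𝔄 : IsSetAlgebra 𝔄) (hA : A ∈ 𝔄) (hB : B ∈ 𝔄) :
    μ (A ∪ B) ≤ μ A + μ B := by
  have hsplit := hμ.2.2 A hA (B \ A) (h𝔄.sdiff_mem hB hA) disjoint_sdiff_right
  rw [union_sdiff_self] at hsplit
  linarith [hμ.mono h𝔄 (h𝔄.sdiff_mem hB hA) hB sdiff_subset]

theorem compl (hμ : IsFAProb 𝔄 μ) (h𝔄 : IsSetAlgebra 𝔄) (hA : A ∈ 𝔄) : μ Aᶜ = 1 - μ A := by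
  have hsplit := hμ.2.2 A hA Aᶜ (h𝔄.compl_mem hA) disjoint_compl_right
  rw [union_compl_self, hμ.1] at hsplit
  linarith

theorem midpoint {𝒞 : Set (Set X)} {ν₁ ν₂ : Set X → ℝ} (h₁ : IsFAProb 𝒞 ν₁)
    (h₂ : IsFAProb 𝒞 ν₂) : IsFAProb 𝒞 fun E => (ν₁ E + ν₂ E) / 2 := by
  refine ⟨by beta_reduce; rw [h₁.1, h₂.1]; norm_num, fun C hC => ?_, fun C hC D hD hCD => ?_⟩
  · have := h₁.2.1 C hC
    have := h₂.2.1 C hC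
    positivity
  · beta_reduce
    rw [h₁.2.2 C hC D hD hCD, h₂.2.2 C hC D hD hCD]
    ring

end IsFAProb

section OuterMeasure

variable {E F A B : Set X}

theorem outerM_le (hμ : IsFAProb 𝔄 μ) (hB : B ∈ 𝔄) (hEB : E ⊆ B) : outerM 𝔄 μ E ≤ μ B :=
  csInf_le ⟨0, by rintro _ ⟨A, ⟨hA, -⟩, rfl⟩; exact hμ.2.1 A hA⟩ ⟨B, ⟨hB, hEB⟩, rfl⟩

theorem le_outerM (h𝔄 : IsSetAlgebra 𝔄) {c : ℝ} (h : ∀ B ∈ 𝔄, E ⊆ B → c ≤ μ B) :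
    c ≤ outerM 𝔄 μ E :=
  le_csInf ⟨μ univ, univ, ⟨h𝔄.univ_mem, subset_univ E⟩, rfl⟩
    (by rintro _ ⟨B, ⟨hB, hEB⟩, rfl⟩; exact h B hB hEB)

theorem outerM_nonneg (h𝔄 : IsSetAlgebra 𝔄) (hμ : IsFAProb 𝔄 μ) : 0 ≤ outerM 𝔄 μ E :=
  le_outerM h𝔄 fun B hB _ => hμ.2.1 B hB

theorem outerM_of_mem (h𝔄 : IsSetAlgebra 𝔄) (hμ : IsFAProb 𝔄 μ) (hA : A ∈ 𝔄) :
    outerM 𝔄 μ A = μ A :=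
  le_antisymm (outerM_le hμ hA subset_rfl) (le_outerM h𝔄 fun _ hB hAB => hμ.mono h𝔄 hA hB hAB)

theorem outerM_union_le (h𝔄 : IsSetAlgebra 𝔄) (hμ : IsFAProb 𝔄 μ) :
    outerM 𝔄 μ (E ∪ F) ≤ outerM 𝔄 μ E + outerM 𝔄 μ F := by
  have hF : ∀ B ∈ 𝔄, E ⊆ B → outerM 𝔄 μ (E ∪ F) - μ B ≤ outerM 𝔄 μ F :=
    fun B hB hEB => le_outerM h𝔄 fun B' hB' hFB' => by
      linarith [outerM_le hμ (h𝔄.union_mem hB hB') (union_subset_union hEB hFB'),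
        hμ.union_le h𝔄 hB hB']
  have hE : outerM 𝔄 μ (E ∪ F) - outerM 𝔄 μ F ≤ outerM 𝔄 μ E :=
    le_outerM h𝔄 fun B hB hEB => by linarith [hF B hB hEB]
  linarith

theorem outerM_union_of_separated (h𝔄 : IsSetAlgebra 𝔄) (hμ : IsFAProb 𝔄 μ) (hA : A ∈ 𝔄)
    (hB : B ∈ 𝔄) (hAB : Disjoint A B) (hEA : E ⊆ A) (hFB : F ⊆ B) :
    outerM 𝔄 μ (E ∪ F) = outerM 𝔄 μ E + outerM 𝔄 μ F := by
  refine le_antisymm (outerM_union_le h𝔄 hμ) (le_outerM h𝔄 fun G hG hEFG => ?_)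
  have hGA := h𝔄.inter_mem hG hA
  have hGB := h𝔄.inter_mem hG hB
  calc outerM 𝔄 μ E + outerM 𝔄 μ F ≤ μ (G ∩ A) + μ (G ∩ B) :=
        add_le_add (outerM_le hμ hGA (subset_inter (subset_union_left.trans hEFG) hEA))
          (outerM_le hμ hGB (subset_inter (subset_union_right.trans hEFG) hFB))
    _ = μ (G ∩ A ∪ G ∩ B) :=
        (hμ.2.2 _ hGA _ hGB (hAB.mono inter_subset_right inter_subset_right)).symm
    _ ≤ μ G :=
        hμ.mono h𝔄 (h𝔄.union_mem hGA hGB) hG (union_subset inter_subset_left inter_subset_left)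

end OuterMeasure

/-- For a finitely additive probability this agrees with `sSup {μ A | A ∈ 𝔄, A ⊆ E}`. -/
noncomputable def innerM (𝔄 : Set (Set X)) (μ : Set X → ℝ) (E : Set X) : ℝ :=
  1 - outerM 𝔄 μ Eᶜ

theorem innerM_nonneg (h𝔄 : IsSetAlgebra 𝔄) (hμ : IsFAProb 𝔄 μ) (E : Set X) :
    0 ≤ innerM 𝔄 μ E := by
  rw [innerM, sub_nonneg, ← hμ.1]
  exact outerM_le hμ h𝔄.univ_mem (subset_univ Eᶜ)

theorem innerM_inter_of_mem (h𝔄 : IsSetAlgebra 𝔄) (hμ : IsFAProb 𝔄 μ) {A : Set X} (hA : A ∈ 𝔄)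
    (W : Set X) : innerM 𝔄 μ (A ∩ W) = μ A - outerM 𝔄 μ (A ∩ Wᶜ) := by
  have hcompl : (A ∩ W)ᶜ = Aᶜ ∪ A ∩ Wᶜ := by
    rw [compl_inter, union_inter_distrib_left, compl_union_self, univ_inter]
  rw [innerM, hcompl, outerM_union_of_separated h𝔄 hμ (h𝔄.compl_mem hA) hA disjoint_compl_left
    subset_rfl inter_subset_left, outerM_of_mem h𝔄 hμ (h𝔄.compl_mem hA), hμ.compl h𝔄 hA]
  ring

def IsTraceOn (𝔄 : Set (Set X)) (W C : Set X) : Prop :=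
  ∃ A ∈ 𝔄, C ∩ W = A ∩ W

namespace IsTraceOn

variable {W C D : Set X}

theorem of_mem {A : Set X} (hA : A ∈ 𝔄) : IsTraceOn 𝔄 W A :=
  ⟨A, hA, rfl⟩

theorem compl (h𝔄 : IsSetAlgebra 𝔄) (hC : IsTraceOn 𝔄 W C) : IsTraceOn 𝔄 W Cᶜ := by
  obtain ⟨A, hA, hCA⟩ := hC
  refine ⟨Aᶜ, h𝔄.compl_mem hA, ?_⟩
  ext x
  have hx := Set.ext_iff.mp hCA x
  simp only [mem_inter_iff, mem_compl_iff] at hx ⊢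
  tauto

theorem union (h𝔄 : IsSetAlgebra 𝔄) (hC : IsTraceOn 𝔄 W C) (hD : IsTraceOn 𝔄 W D) :
    IsTraceOn 𝔄 W (C ∪ D) := by
  obtain ⟨A, hA, hCA⟩ := hC
  obtain ⟨B, hB, hDB⟩ := hD
  refine ⟨A ∪ B, h𝔄.union_mem hA hB, ?_⟩
  rw [union_inter_distrib_right, union_inter_distrib_right, hCA, hDB]

theorem of_genAlg (h𝔄 : IsSetAlgebra 𝔄) {Z : Set X} (hZ : IsTraceOn 𝔄 W Z)
    (hC : GenAlg (𝔄 ∪ {Z}) C) : IsTraceOn 𝔄 W C := by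
  induction hC with
  | basic A hA =>
    rcases hA with hA | rfl
    exacts [of_mem hA, hZ]
  | empty => exact of_mem h𝔄.empty_mem
  | compl _ _ ih => exact ih.compl h𝔄
  | union _ _ _ _ ihA ihB => exact ihA.union h𝔄 ihB

theorem exists_disjoint (h𝔄 : IsSetAlgebra 𝔄) (hC : IsTraceOn 𝔄 W C) (hD : IsTraceOn 𝔄 W D)
    (hCD : Disjoint C D) :
    ∃ A ∈ 𝔄, ∃ B ∈ 𝔄, Disjoint A B ∧ C ∩ W = A ∩ W ∧ D ∩ W = B ∩ W := by
  obtain ⟨A, hA, hCA⟩ := hC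
  obtain ⟨B, hB, hDB⟩ := hD
  refine ⟨A, hA, B \ A, h𝔄.sdiff_mem hB hA, disjoint_sdiff_right, hCA, ?_⟩
  ext x
  have hxC := Set.ext_iff.mp hCA x
  have hxD := Set.ext_iff.mp hDB x
  have hxCD : x ∈ C → x ∉ D := fun h => Set.disjoint_left.mp hCD h
  simp only [mem_inter_iff, mem_sdiff] at hxC hxD ⊢
  tauto

end IsTraceOn

section TraceAdditivity

variable {W C D : Set X}

theorem outerM_inter_union (h𝔄 : IsSetAlgebra 𝔄) (hμ : IsFAProb 𝔄 μ) (hC : IsTraceOn 𝔄 W C)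
    (hD : IsTraceOn 𝔄 W D) (hCD : Disjoint C D) :
    outerM 𝔄 μ ((C ∪ D) ∩ W) = outerM 𝔄 μ (C ∩ W) + outerM 𝔄 μ (D ∩ W) := by
  obtain ⟨A, hA, B, hB, hAB, hCA, hDB⟩ := hC.exists_disjoint h𝔄 hD hCD
  rw [union_inter_distrib_right, hCA, hDB]
  exact outerM_union_of_separated h𝔄 hμ hA hB hAB inter_subset_left inter_subset_left

theorem innerM_inter_union (h𝔄 : IsSetAlgebra 𝔄) (hμ : IsFAProb 𝔄 μ) (hC : IsTraceOn 𝔄 W C)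
    (hD : IsTraceOn 𝔄 W D) (hCD : Disjoint C D) :
    innerM 𝔄 μ ((C ∪ D) ∩ W) = innerM 𝔄 μ (C ∩ W) + innerM 𝔄 μ (D ∩ W) := by
  obtain ⟨A, hA, B, hB, hAB, hCA, hDB⟩ := hC.exists_disjoint h𝔄 hD hCD
  rw [union_inter_distrib_right, hCA, hDB, ← union_inter_distrib_right,
    innerM_inter_of_mem h𝔄 hμ (h𝔄.union_mem hA hB), innerM_inter_of_mem h𝔄 hμ hA,
    innerM_inter_of_mem h𝔄 hμ hB, hμ.2.2 A hA B hB hAB, union_inter_distrib_right,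
    outerM_union_of_separated h𝔄 hμ hA hB hAB inter_subset_left inter_subset_left]
  ring

end TraceAdditivity

/-- `losMarczewskiExt 𝔄 μ Z` and `losMarczewskiExt 𝔄 μ Zᶜ` are the extensions `μ̄` and `μ̲`. -/
noncomputable def losMarczewskiExt (𝔄 : Set (Set X)) (μ : Set X → ℝ) (W E : Set X) : ℝ :=
  outerM 𝔄 μ (E ∩ W) + innerM 𝔄 μ (E ∩ Wᶜ)

section LosMarczewski

variable {W : Set X}

theorem losMarczewskiExt_of_mem (h𝔄 : IsSetAlgebra 𝔄) (hμ : IsFAProb 𝔄 μ) {A : Set X}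
    (hA : A ∈ 𝔄) : losMarczewskiExt 𝔄 μ W A = μ A := by
  rw [losMarczewskiExt, innerM_inter_of_mem h𝔄 hμ hA, compl_compl]
  ring

theorem outerM_inter_le_losMarczewskiExt (h𝔄 : IsSetAlgebra 𝔄) (hμ : IsFAProb 𝔄 μ) (E : Set X) :
    outerM 𝔄 μ (E ∩ W) ≤ losMarczewskiExt 𝔄 μ W E :=
  le_add_of_nonneg_right (innerM_nonneg h𝔄 hμ _)

theorem losMarczewskiExt_nonneg (h𝔄 : IsSetAlgebra 𝔄) (hμ : IsFAProb 𝔄 μ) (E : Set X) :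
    0 ≤ losMarczewskiExt 𝔄 μ W E :=
  (outerM_nonneg h𝔄 hμ).trans (outerM_inter_le_losMarczewskiExt h𝔄 hμ E)

theorem IsTraceOn.losMarczewskiExt_pos (h𝔄 : IsSetAlgebra 𝔄) (hμ : IsFAProb 𝔄 μ) {C : Set X}
    (hC : IsTraceOn 𝔄 W C) (hpos : ∀ A ∈ 𝔄, (A ∩ W).Nonempty → 0 < outerM 𝔄 μ (A ∩ W))
    (hne : (C ∩ W).Nonempty) : 0 < losMarczewskiExt 𝔄 μ W C := by
  obtain ⟨A, hA, hCA⟩ := hC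
  rw [hCA] at hne
  exact (hCA ▸ hpos A hA hne).trans_le (outerM_inter_le_losMarczewskiExt h𝔄 hμ C)

theorem isFAProb_losMarczewskiExt (h𝔄 : IsSetAlgebra 𝔄) (hμ : IsFAProb 𝔄 μ)
    {𝒞 : Set (Set X)} (h𝒞 : ∀ C ∈ 𝒞, IsTraceOn 𝔄 W C ∧ IsTraceOn 𝔄 Wᶜ C) :
    IsFAProb 𝒞 (losMarczewskiExt 𝔄 μ W) := by
  refine ⟨by rw [losMarczewskiExt_of_mem h𝔄 hμ h𝔄.univ_mem, hμ.1],
    fun E _ => losMarczewskiExt_nonneg h𝔄 hμ E, fun C hC D hD hCD => ?_⟩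
  rw [losMarczewskiExt, losMarczewskiExt, losMarczewskiExt,
    outerM_inter_union h𝔄 hμ (h𝒞 C hC).1 (h𝒞 D hD).1 hCD,
    innerM_inter_union h𝔄 hμ (h𝒞 C hC).2 (h𝒞 D hD).2 hCD]
  ring

end LosMarczewski

end

theorem stmt_4_general {X : Type*} (𝔄 : Set (Set X)) (h𝔄 : IsAlg 𝔄)
    (μ : Set X → ℝ) (hμ : IsFAProb 𝔄 μ) (Z : Set X)
    (h0 : ∀ A ∈ 𝔄, (A ∩ Z).Nonempty → 0 < outerM 𝔄 μ (A ∩ Z))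
    (h1 : ∀ A ∈ 𝔄, (A ∩ Zᶜ).Nonempty → 0 < outerM 𝔄 μ (A ∩ Zᶜ)) :
    ∃ ν : Set X → ℝ, (∀ A ∈ 𝔄, ν A = μ A) ∧
      IsFAProb {C | GenAlg (𝔄 ∪ {Z}) C} ν ∧
      StrictlyPos {C | GenAlg (𝔄 ∪ {Z}) C} ν := by
  have h𝔄 := h𝔄.isSetAlgebra
  have htrace : ∀ C ∈ {C | GenAlg (𝔄 ∪ {Z}) C}, IsTraceOn 𝔄 Z C ∧ IsTraceOn 𝔄 Zᶜ C :=
    fun C hC => ⟨.of_genAlg h𝔄 ⟨univ, h𝔄.univ_mem, by simp⟩ hC,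
      .of_genAlg h𝔄 ⟨∅, h𝔄.empty_mem, by simp⟩ hC⟩
  have htrace' : ∀ C ∈ {C | GenAlg (𝔄 ∪ {Z}) C}, IsTraceOn 𝔄 Zᶜ C ∧ IsTraceOn 𝔄 Zᶜᶜ C :=
    fun C hC => by simpa only [compl_compl, and_comm] using htrace C hC
  refine ⟨fun E => (losMarczewskiExt 𝔄 μ Z E + losMarczewskiExt 𝔄 μ Zᶜ E) / 2,
    fun A hA => by simp only [losMarczewskiExt_of_mem h𝔄 hμ hA]; ring,
    (isFAProb_losMarczewskiExt h𝔄 hμ htrace).midpoint (isFAProb_losMarczewskiExt h𝔄 hμ htrace'),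
    ?_⟩
  rintro C hC ⟨x, hxC⟩
  have := losMarczewskiExt_nonneg h𝔄 hμ (W := Z) C
  have := losMarczewskiExt_nonneg h𝔄 hμ (W := Zᶜ) C
  by_cases hx : x ∈ Z
  · linarith [(htrace C hC).1.losMarczewskiExt_pos h𝔄 hμ h0 ⟨x, hxC, hx⟩]
  · linarith [(htrace C hC).2.losMarczewskiExt_pos h𝔄 hμ h1 ⟨x, hxC, hx⟩]

/-- If `μ*(A ∩ Z) > 0` and `μ*(A ∩ Zᶜ) > 0` whenever these intersections are
nonempty (for `A ∈ 𝔄`), then a strictly positive `μ` extends to a strictly positive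
finitely additive probability measure on `𝔄(Z)`. -/
theorem stmt_4 {X : Type*} (𝔄 : Set (Set X)) (h𝔄 : IsAlg 𝔄)
    (μ : Set X → ℝ) (hμ : IsFAProb 𝔄 μ) (hsp : StrictlyPos 𝔄 μ) (Z : Set X)
    (h0 : ∀ A ∈ 𝔄, (A ∩ Z).Nonempty → 0 < outerM 𝔄 μ (A ∩ Z))
    (h1 : ∀ A ∈ 𝔄, (A ∩ Zᶜ).Nonempty → 0 < outerM 𝔄 μ (A ∩ Zᶜ)) :
    ∃ ν : Set X → ℝ, (∀ A ∈ 𝔄, ν A = μ A) ∧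
      IsFAProb {C | GenAlg (𝔄 ∪ {Z}) C} ν ∧
      StrictlyPos {C | GenAlg (𝔄 ∪ {Z}) C} ν :=
  stmt_4_general 𝔄 h𝔄 μ hμ Z h0 h1
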